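/- The kernel of the reduction homomorphism GL(n,ℤ) → GL(n,ℤ/3ℤ) is torsion-free; i.e., if A ∈ GL(n,ℤ) has finite order and A ≡ I (mod 3), then A = I. -/

import Mathlib

/-!
Let `q` be an odd prime and write an element of prime order `p` that is `≡ 1 (mod q)` as
`B = 1 + q ^ k * X` with `k ≥ 1`. Expanding `B ^ p = 1` binomially, every term beyond the linear
one `p q^k X` is divisible by `q ^ (k + 1)`, and even by `q ^ (k + 2)` when `p = q`, because
`q ∣ C(q, j)` for `0 < j < q` and `q k ≥ k + 2` for `q ≥ 3`. Cancelling `q ^ k` gives `q ∣ X`, so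
`B - 1` is divisible by every power of `q`; over `ℤ` this forces `B = 1`. A nontrivial element of
finite order has a nontrivial power of prime order.
-/

open Finset

instance Matrix.instIsAddTorsionFree {m n α : Type*} [AddMonoid α] [IsAddTorsionFree α] :
    IsAddTorsionFree (Matrix m n α) :=
  inferInstanceAs (IsAddTorsionFree (m → n → α))

theorem Nat.Prime.pow_add_two_dvd_pow_mul_choose {q k m : ℕ} (hq : q.Prime) (hq2 : q ≠ 2)
    (hk : k ≠ 0) (hm : m ∈ Ico 2 (q + 1)) : q ^ (k + 2) ∣ q ^ (k * m) * q.choose m := by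
  obtain ⟨hm2, hmq⟩ := mem_Ico.1 hm
  have hk1 : 1 ≤ k := Nat.one_le_iff_ne_zero.2 hk
  rcases (Nat.lt_succ_iff.1 hmq).lt_or_eq with hlt | heq
  · rw [pow_succ]
    exact mul_dvd_mul (pow_dvd_pow q (by nlinarith)) (hq.dvd_choose_self (by omega) hlt)
  · have hq3 : 3 ≤ q := by have := hq.two_le; omega
    rw [heq]
    exact (pow_dvd_pow q (by nlinarith)).mul_right _

section Ring

variable {R : Type*} [Ring R]

theorem natCast_dvd_of_dvd_natCast_mul {p q : ℕ} (hpq : p.Coprime q) {x : R}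
    (h : (q : R) ∣ p * x) : (q : R) ∣ x := by
  obtain ⟨a, b, hab⟩ := Nat.isCoprime_iff_coprime.2 hpq
  obtain ⟨z, hz⟩ := h
  refine ⟨a * z + b * x, ?_⟩
  calc x = ((a * p + b * q : ℤ) : R) * x := by rw [hab, Int.cast_one, one_mul]
    _ = a * (p * x) + q * (b * x) := by
      push_cast
      rw [add_mul, mul_assoc, (Int.cast_commute b (q : R)).eq, mul_assoc]
    _ = q * (a * z + b * x) := by
      rw [hz, ← mul_assoc (a : R), Int.cast_comm, mul_assoc, mul_add]

variable [IsAddTorsionFree R]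

theorem dvd_of_natCast_mul_dvd_natCast_mul {n : ℕ} (hn : n ≠ 0) {d y : R}
    (h : (n : R) * d ∣ n * y) : d ∣ y := by
  obtain ⟨z, hz⟩ := h
  exact ⟨z, nsmul_right_injective hn (by simpa only [nsmul_eq_mul, mul_assoc] using hz)⟩

theorem natCast_pow_dvd_mul_of_one_add_pow_eq_one {p q k e : ℕ} (hq : q ≠ 0) {x : R}
    (h : (1 + (q : R) ^ k * x) ^ p = 1)
    (hcoef : ∀ m ∈ Ico 2 (p + 1), q ^ (k + e) ∣ q ^ (k * m) * p.choose m) :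
    (q : R) ^ e ∣ p * x := by
  rcases p.eq_zero_or_pos with rfl | hp
  · simp
  set y := (q : R) ^ k * x with hy
  have hexpand : (1 + y) ^ p = 1 + p * y + ∑ m ∈ Ico 2 (p + 1), y ^ m * p.choose m := by
    rw [add_comm, (Commute.one_right y).add_pow,
      ← sum_range_add_sum_Ico _ (by omega : 2 ≤ p + 1)]
    simp [sum_range_succ, add_comm, (Nat.cast_commute p y).eq]
  have hterm : ∀ m ∈ Ico 2 (p + 1), (q : R) ^ (k + e) ∣ y ^ m * p.choose m := by
    intro m hm
    have : y ^ m * p.choose m = ((q ^ (k * m) * p.choose m : ℕ) : R) * x ^ m := by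
      rw [hy, ((Nat.cast_commute q x).pow_left k).mul_pow, ← pow_mul, Nat.cast_mul, Nat.cast_pow,
        mul_assoc, mul_assoc, (Nat.cast_commute _ (x ^ m)).eq]
    rw [this]
    exact_mod_cast (Nat.cast_dvd_cast (hcoef m hm)).mul_right _
  have hpy : (q : R) ^ (k + e) ∣ p * y := by
    have : p * y = -∑ m ∈ Ico 2 (p + 1), y ^ m * p.choose m := by
      rw [h, add_assoc, left_eq_add] at hexpand
      exact eq_neg_of_add_eq_zero_left hexpand
    rw [this]
    exact (dvd_sum hterm).neg_right
  rw [hy, ← mul_assoc, ((Nat.cast_commute p (q : R)).pow_right k).eq, mul_assoc,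
    pow_add] at hpy
  exact dvd_of_natCast_mul_dvd_natCast_mul (pow_ne_zero k hq) (by exact_mod_cast hpy)

theorem natCast_dvd_of_one_add_pow_eq_one {p q k : ℕ} (hp : p.Prime) (hq : q.Prime) (hq2 : q ≠ 2)
    (hk : k ≠ 0) {x : R} (h : (1 + (q : R) ^ k * x) ^ p = 1) : (q : R) ∣ x := by
  rcases eq_or_ne p q with rfl | hpq
  · have hdvd := natCast_pow_dvd_mul_of_one_add_pow_eq_one (e := 2) hp.ne_zero h
      fun m hm => hp.pow_add_two_dvd_pow_mul_choose hq2 hk hm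
    exact dvd_of_natCast_mul_dvd_natCast_mul hp.ne_zero (by rwa [← pow_two])
  · have hk1 : 1 ≤ k := Nat.one_le_iff_ne_zero.2 hk
    have hdvd := natCast_pow_dvd_mul_of_one_add_pow_eq_one (e := 1) hq.ne_zero h
      fun m hm => (pow_dvd_pow q (by nlinarith [(mem_Ico.1 hm).1])).mul_right _
    rw [pow_one] at hdvd
    exact natCast_dvd_of_dvd_natCast_mul ((Nat.coprime_primes hp hq).2 hpq) hdvd

theorem natCast_pow_dvd_sub_one_of_pow_eq_one {p q : ℕ} (hp : p.Prime) (hq : q.Prime)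
    (hq2 : q ≠ 2) {B : R} (hB : B ^ p = 1) (h : (q : R) ∣ B - 1) (k : ℕ) :
    (q : R) ^ k ∣ B - 1 := by
  induction k with
  | zero => simp
  | succ k ih =>
    rcases k.eq_zero_or_pos with rfl | hk
    · simpa using h
    obtain ⟨x, hx⟩ := ih
    obtain ⟨z, rfl⟩ : (q : R) ∣ x :=
      natCast_dvd_of_one_add_pow_eq_one hp hq hq2 hk.ne' (by rwa [← hx, add_sub_cancel])
    exact ⟨z, by rw [hx, pow_succ, mul_assoc]⟩

end Ring

namespace Matrix

variable {n : Type*} [Fintype n] [DecidableEq n]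

theorem natCast_dvd_iff {d : ℕ} {N : Matrix n n ℤ} :
    (d : Matrix n n ℤ) ∣ N ↔ ∀ i j, (d : ℤ) ∣ N i j := by
  constructor
  · rintro ⟨c, rfl⟩ i j
    rw [← nsmul_eq_mul]
    exact ⟨c i j, by simp⟩
  · intro h
    refine ⟨of fun i j => N i j / d, ?_⟩
    rw [← nsmul_eq_mul]
    ext i j
    simp [Int.mul_ediv_cancel' (h i j)]

theorem eq_zero_of_forall_natCast_pow_dvd {q : ℕ} (hq : q ≠ 1) {N : Matrix n n ℤ}
    (h : ∀ k, (q : Matrix n n ℤ) ^ k ∣ N) : N = 0 := by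
  ext i j
  by_contra hne
  obtain ⟨k, hk⟩ := (Int.finiteMultiplicity_iff (a := q)).2 ⟨by simpa using hq, hne⟩
  exact hk (by exact_mod_cast natCast_dvd_iff.1 (by exact_mod_cast h (k + 1)) i j)

theorem natCast_dvd_sub_one_of_map_eq_one {q : ℕ} {B : Matrix n n ℤ}
    (h : B.map (Int.cast : ℤ → ZMod q) = 1) : (q : Matrix n n ℤ) ∣ B - 1 := by
  have h0 : (B - 1).map (Int.cast : ℤ → ZMod q) = 0 := by
    rw [Matrix.map_sub _ (fun _ _ => Int.cast_sub _ _), h,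
      Matrix.map_one _ Int.cast_zero Int.cast_one, sub_self]
  exact natCast_dvd_iff.2 fun i j => (ZMod.intCast_zmod_eq_zero_iff_dvd _ _).1 (congrFun₂ h0 i j)

theorem eq_one_of_pow_eq_one_of_map_eq_one {p q : ℕ} (hp : p.Prime) (hq : q.Prime) (hq2 : q ≠ 2)
    {B : Matrix n n ℤ} (hB : B ^ p = 1) (h : B.map (Int.cast : ℤ → ZMod q) = 1) : B = 1 :=
  sub_eq_zero.1 <| eq_zero_of_forall_natCast_pow_dvd hq.one_lt.ne' <|
    natCast_pow_dvd_sub_one_of_pow_eq_one hp hq hq2 hB (natCast_dvd_sub_one_of_map_eq_one h)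

end Matrix

/-- Minkowski's lemma: the kernel of reduction mod 3, `GL(n,ℤ) → GL(n,ℤ/3)`, is
torsion-free: a finite-order `A ∈ GL(n,ℤ)` with `A ≡ I (mod 3)` is the identity. -/
theorem stmt_10 (n : ℕ) (A : GL (Fin n) ℤ) (hA : IsOfFinOrder A)
    (h3 : ((A : Matrix (Fin n) (Fin n) ℤ)).map (Int.cast : ℤ → ZMod 3) = 1) :
    A = 1 := by
  by_contra hne
  set p := (orderOf A).minFac
  have hp : p.Prime := Nat.minFac_prime (mt orderOf_eq_one_iff.1 hne)
  set B := A ^ (orderOf A / p)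
  have hBp : orderOf B = p := orderOf_pow_orderOf_div hA.orderOf_pos.ne' (Nat.minFac_dvd _)
  have hB : (B : Matrix (Fin n) (Fin n) ℤ) = 1 := by
    refine Matrix.eq_one_of_pow_eq_one_of_map_eq_one hp Nat.prime_three (by norm_num) ?_ ?_
    · rw [← Units.val_pow_eq_pow_val, ← hBp, pow_orderOf_eq_one, Units.val_one]
    · have hmap := map_pow (Int.castRingHom (ZMod 3)).mapMatrix (A : Matrix (Fin n) (Fin n) ℤ)
        (orderOf A / p)
      simp only [RingHom.mapMatrix_apply, Int.coe_castRingHom] at hmap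
      rw [Units.val_pow_eq_pow_val, hmap, h3, one_pow]
  exact hp.one_lt.ne' (hBp ▸ orderOf_eq_one_iff.2 (Units.ext hB))
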